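/- For integers l ≥ 1 and 0 ≤ c ≤ l, with c' ≤ c, the quantity q^{2l - c' - 1}[2l - c'] · Π_{j} q^{(c_j - δ_{j,p})(2l - c_j)} [2l - δ_{j,p} choose c_j - δ_{j,p}] lies in q^{-1 - 2(c_{p-1} - c_p)} A whenever c_{p-1} ≥ c_p, where A is the ring of rational functions in q regular at 0 and the product ranges over a weakly decreasing sequence l = c_0 ≥ c_1 ≥ ... ≥ c_{k'} ≥ 0 with c_p ≥ 1. -/
import Mathlib

noncomputable section

abbrev Kq : Type := RatFunc ℚ

def qv : Kq := RatFunc.X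

def Areg : Set Kq := {f | Polynomial.eval 0 f.denom ≠ 0}

def qInt (m : ℤ) : Kq := (qv ^ m - qv ^ (-m)) / (qv - qv⁻¹)

def qFact (n : ℕ) : Kq := ∏ k ∈ Finset.range n, qInt (k + 1)

def qBinom (m n : ℕ) : Kq := qFact m / (qFact n * qFact (m - n))

def kdelta (j p : ℕ) : ℕ := if j = p then 1 else 0

lemma hqv : qv ≠ 0 := RatFunc.X_ne_zero

lemma hq2 : qv ^ 2 - 1 ≠ 0 := by
  have : (qv : Kq) ^ 2 - 1 = algebraMap (Polynomial ℚ) Kq (Polynomial.X ^ 2 - 1) := by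
    simp [qv]
  rw [this]
  apply RatFunc.algebraMap_ne_zero
  intro h
  have := congrArg (Polynomial.eval 2) h
  norm_num at this

lemma hden : qv - qv⁻¹ ≠ 0 := by
  have h : (qv - qv⁻¹) * qv = qv ^ 2 - 1 := by
    rw [sub_mul, inv_mul_cancel₀ hqv]; ring
  intro h0
  rw [h0, zero_mul] at h
  exact hq2 h.symm

def G (k : ℕ) : Polynomial ℚ := ∑ i ∈ Finset.range k, Polynomial.X ^ (2 * i)

def P (n : ℕ) : Polynomial ℚ := ∏ k ∈ Finset.range n, G (k + 1)

lemma evalG (k : ℕ) : (G (k + 1)).eval 0 = 1 := by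
  simp only [G, Polynomial.eval_finset_sum, Polynomial.eval_pow, Polynomial.eval_X]
  rw [Finset.sum_eq_single 0]
  · norm_num
  · intro b _ hb
    rw [zero_pow]
    omega
  · intro h
    simp at h

lemma evalP (n : ℕ) : (P n).eval 0 = 1 := by
  simp only [P, Polynomial.eval_prod]
  rw [Finset.prod_congr rfl fun k _ => evalG k]
  simp

lemma Pne (n : ℕ) : algebraMap (Polynomial ℚ) Kq (P n) ≠ 0 := by
  apply RatFunc.algebraMap_ne_zero
  intro h
  have := evalP n
  rw [h] at this
  norm_num at this

lemma algG (k : ℕ) : algebraMap (Polynomial ℚ) Kq (G k) = ∑ i ∈ Finset.range k, (qv ^ 2) ^ i := by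
  simp [G, map_sum, map_pow, qv, pow_mul]

lemma qInt_natCast (k : ℕ) : qInt (k : ℤ) = (qv⁻¹) ^ (k - 1) * algebraMap (Polynomial ℚ) Kq (G k) := by
  cases k with
  | zero => simp [qInt, G]
  | succ s =>
    have key : (∑ i ∈ Finset.range (s + 1), (qv ^ 2) ^ i) * (qv ^ 2 - 1)
        = (qv ^ 2) ^ (s + 1) - 1 := geom_sum_mul _ _
    rw [algG]
    unfold qInt
    rw [zpow_natCast, zpow_neg, zpow_natCast, div_eq_iff hden]
    simp only [Nat.add_sub_cancel]
    set GS := ∑ i ∈ Finset.range (s + 1), (qv ^ 2) ^ i with hGS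
    have hs1 : qv⁻¹ ^ s * qv ^ s = 1 := by
      rw [← mul_pow, inv_mul_cancel₀ hqv, one_pow]
    have hqi : qv⁻¹ * qv = 1 := inv_mul_cancel₀ hqv
    have hinv : (qv ^ (s + 1))⁻¹ * (qv ^ (s + 1)) = 1 := inv_mul_cancel₀ (pow_ne_zero _ hqv)
    refine mul_right_cancel₀ (pow_ne_zero (s + 1) hqv) ?_
    linear_combination -key - (GS * qv ^ 2) * hs1 + (GS * qv⁻¹ ^ s * qv ^ s) * hqi + GS * hs1 - hinv
def S (n : ℕ) : ℕ := ∑ k ∈ Finset.range n, k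

lemma S_add (n d : ℕ) : S (n + d) = S n + S d + n * d := by
  induction d with
  | zero => simp [S]
  | succ d ih =>
    have h1 : S (n + (d+1)) = S (n + d) + (n + d) := by
      rw [show n + (d+1) = (n+d) + 1 by ring, S, Finset.sum_range_succ]; rfl
    have h2 : S (d + 1) = S d + d := by rw [S, Finset.sum_range_succ]; rfl
    rw [h1, ih, h2]; ring

lemma P_succ (n : ℕ) : P (n + 1) = P n * G (n + 1) := by
  rw [P, P, Finset.prod_range_succ]

lemma qFact_eq (n : ℕ) : qFact n = (qv⁻¹) ^ (S n) * algebraMap (Polynomial ℚ) Kq (P n) := by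
  induction n with
  | zero => simp [qFact, S, P]
  | succ n ih =>
    have harg : ((n : ℤ) + 1) = ((n + 1 : ℕ) : ℤ) := by push_cast; ring
    rw [qFact, Finset.prod_range_succ, ← qFact, ih, harg, qInt_natCast,
      Nat.add_sub_cancel, show S (n+1) = S n + n from by
        rw [S, Finset.sum_range_succ]; rfl,
      P_succ, map_mul, pow_add]
    ring

lemma qBinom_eq {m n : ℕ} (h : n ≤ m) :
    qv ^ (n * (m - n)) * qBinom m n =
      algebraMap (Polynomial ℚ) Kq (P m) /
        algebraMap (Polynomial ℚ) Kq (P n * P (m - n)) := by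
  obtain ⟨d, rfl⟩ := Nat.exists_eq_add_of_le h
  rw [qBinom, Nat.add_sub_cancel_left, qFact_eq, qFact_eq, qFact_eq, S_add, map_mul]
  have hx : ∀ t : ℕ, (qv⁻¹ : Kq) ^ t ≠ 0 := fun t => pow_ne_zero _ (inv_ne_zero hqv)
  have hc : qv ^ (n * d) * (qv⁻¹) ^ (n * d) = 1 := by
    rw [← mul_pow, mul_inv_cancel₀ hqv, one_pow]
  rw [pow_add, pow_add, mul_div_assoc',
    div_eq_div_iff (mul_ne_zero (mul_ne_zero (hx _) (Pne _)) (mul_ne_zero (hx _) (Pne _)))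
      (mul_ne_zero (Pne _) (Pne _))]
  linear_combination (qv⁻¹ ^ (S n) * qv⁻¹ ^ (S d) * algebraMap (Polynomial ℚ) Kq (P (n + d)) *
    algebraMap (Polynomial ℚ) Kq (P n) * algebraMap (Polynomial ℚ) Kq (P d)) * hc
def good (f : Kq) : Prop :=
  ∃ p r : Polynomial ℚ, r.eval 0 ≠ 0 ∧
    f = algebraMap (Polynomial ℚ) Kq p / algebraMap (Polynomial ℚ) Kq r

lemma good_one : good 1 := ⟨1, 1, by norm_num, by simp⟩

lemma good_mul {f g : Kq} (hf : good f) (hg : good g) : good (f * g) := by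
  obtain ⟨p1, r1, h1, rfl⟩ := hf
  obtain ⟨p2, r2, h2, rfl⟩ := hg
  exact ⟨p1 * p2, r1 * r2, by simp [h1, h2], by rw [map_mul, map_mul, div_mul_div_comm]⟩

lemma good_prod {ι : Type*} (s : Finset ι) (f : ι → Kq) (h : ∀ i ∈ s, good (f i)) :
    good (∏ i ∈ s, f i) :=
  Finset.prod_induction f good (fun _ _ => good_mul) good_one h

lemma good_qpow (t : ℕ) : good (qv ^ t) :=
  ⟨Polynomial.X ^ t, 1, by norm_num, by simp [qv]⟩

lemma good_PdivP (m n d : ℕ) :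
    good (algebraMap (Polynomial ℚ) Kq (P m) / algebraMap (Polynomial ℚ) Kq (P n * P d)) :=
  ⟨P m, P n * P d, by simp [evalP], by rw [map_mul]⟩

lemma good_mem_Areg {f : Kq} (hf : good f) : f ∈ Areg := by
  obtain ⟨p, r, hr, rfl⟩ := hf
  have hr0 : r ≠ 0 := fun h => hr (by simp [h])
  have : RatFunc.denom (algebraMap (Polynomial ℚ) Kq p / algebraMap (Polynomial ℚ) Kq r) ∣ r :=
    (RatFunc.denom_dvd hr0).2 ⟨p, rfl⟩
  obtain ⟨t, ht⟩ := this
  have := congrArg (Polynomial.eval 0) ht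
  rw [Polynomial.eval_mul] at this
  intro h0
  rw [h0, zero_mul] at this
  exact hr this

lemma good_alg (p : Polynomial ℚ) : good (algebraMap (Polynomial ℚ) Kq p) :=
  ⟨p, 1, by norm_num, by simp⟩

/-- The norm estimate. -/
theorem norm_estimate (l k' p : ℕ) (hl : 1 ≤ l) (hp : 1 ≤ p) (hpk : p ≤ k')
    (c : ℕ → ℕ) (hc0 : c 0 = l)
    (hdec : ∀ j, j ≤ k' → c (j + 1) ≤ c j) (hcp : 1 ≤ c p) :
    ∃ a ∈ Areg,
      qv ^ (2 * (l : ℤ) - c (p - 1) - 1) * qInt (2 * (l : ℤ) - c (p - 1)) *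
        (∏ j ∈ Finset.Icc 1 k',
          qv ^ (((c j : ℤ) - kdelta j p) * (2 * l - c j)) *
            qBinom (2 * l - kdelta j p) (c j - kdelta j p)) =
      qv ^ (-1 - 2 * ((c (p - 1) : ℤ) - c p)) * a := by
  have hchain : ∀ j, j ≤ k' + 1 → c j ≤ l := by
    intro j hj
    induction j with
    | zero => omega
    | succ j ih => exact le_trans (hdec j (by omega)) (ih (by omega))
  have hc'l : c (p - 1) ≤ l := hchain (p - 1) (by omega)
  have hcpc' : c p ≤ c (p - 1) := by
    have := hdec (p - 1) (by omega)
    rwa [Nat.sub_add_cancel hp] at this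
  set m0 : ℕ := 2 * l - c (p - 1) with hm0def
  have hm0 : 1 ≤ m0 := by omega
  have harg1 : (2 * (l : ℤ) - c (p - 1)) = (m0 : ℤ) := by omega
  have harg2 : ((m0 : ℤ) - 1) = ((m0 - 1 : ℕ) : ℤ) := by omega
  have hT0 : qv ^ (2 * (l : ℤ) - c (p - 1) - 1) * qInt (2 * (l : ℤ) - c (p - 1))
      = algebraMap (Polynomial ℚ) Kq (G m0) := by
    rw [harg1, harg2, qInt_natCast, zpow_natCast, ← mul_assoc, ← mul_pow,
      mul_inv_cancel₀ hqv, one_pow, one_mul]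
  have hgoodP : ∀ j ∈ Finset.Icc 1 k',
      good (qv ^ (((c j : ℤ) - kdelta j p) * (2 * l - c j)) *
        qBinom (2 * l - kdelta j p) (c j - kdelta j p)) := by
    intro j hj
    rw [Finset.mem_Icc] at hj
    have hcj : c j ≤ l := hchain j (by omega)
    have hδ1 : kdelta j p ≤ 1 := by unfold kdelta; split <;> omega
    have hδc : kdelta j p ≤ c j := by
      unfold kdelta; split
      · next h => subst h; exact hcp
      · omega
    have hnm : c j - kdelta j p ≤ 2 * l - kdelta j p := by omega
    have e1 : ((c j : ℤ) - kdelta j p) = ((c j - kdelta j p : ℕ) : ℤ) := by omega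
    have e2 : (2 * (l : ℤ) - c j)
        = (((2 * l - kdelta j p) - (c j - kdelta j p) : ℕ) : ℤ) := by omega
    rw [e1, e2, ← Nat.cast_mul, zpow_natCast, qBinom_eq hnm]
    exact good_PdivP _ _ _
  set e : ℕ := 1 + 2 * (c (p - 1) - c p) with he
  have hee : (-1 - 2 * ((c (p - 1) : ℤ) - c p)) = -(e : ℤ) := by omega
  refine ⟨qv ^ e *
      (qv ^ (2 * (l : ℤ) - c (p - 1) - 1) * qInt (2 * (l : ℤ) - c (p - 1)) *
        (∏ j ∈ Finset.Icc 1 k',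
          qv ^ (((c j : ℤ) - kdelta j p) * (2 * l - c j)) *
            qBinom (2 * l - kdelta j p) (c j - kdelta j p))),
    good_mem_Areg (good_mul (good_qpow e)
      (good_mul (hT0 ▸ good_alg (G m0)) (good_prod _ _ hgoodP))), ?_⟩
  rw [hee, ← mul_assoc, ← zpow_natCast qv e, ← zpow_add₀ hqv, neg_add_cancel, zpow_zero, one_mul]
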